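/- Let d ≥ 2 be an integer, let X ⊆ ℝ^d, and let y ∈ ℝ be such that there exists x ∈ X with x_d ≥ y (i.e., the hyperplane {x : x_d = y} does not lie entirely above X). Let X' = {(x_1,…,x_{d−1}) ∈ ℝ^{d−1} : x ∈ X, x_d ≤ y} be the projection of the part of X at height ≤ y. Then {z ∈ ℝ^{d−1} : (z,y) ∈ sconv(X)} = sconv(X'), where the latter is the stair-convex hull in ℝ^{d−1}. -/

import Mathlib

/-! For `S` stair-convex in `ℝ^(d+1)`, its slice at height `y` is stair-convex in `ℝ^d`
(stair-paths between points of equal height stay at that height); it contains the projection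
`X'`, since for `x ∈ X` below `y` and some `x₀ ∈ X` above it, the vertical leg of `σ(x, x₀)` crosses
height `y` above `x`. Conversely, for `T` stair-convex in `ℝ^d`, the set of points that lie above
height `y` or project into `T` is stair-convex and contains `X`, so the slice of `sconv X` lies in
`sconv X'`. -/

noncomputable def stairPath : (d : ℕ) → (Fin d → ℝ) → (Fin d → ℝ) → Set (Fin d → ℝ)
  | 0, _, _ => Set.univ
  | (d+1), a, b =>
    if a (Fin.last d) ≤ b (Fin.last d) then
      segment ℝ a (Fin.snoc (Fin.init a) (b (Fin.last d))) ∪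
        (fun z => Fin.snoc z (b (Fin.last d))) '' stairPath d (Fin.init a) (Fin.init b)
    else
      segment ℝ b (Fin.snoc (Fin.init b) (a (Fin.last d))) ∪
        (fun z => Fin.snoc z (a (Fin.last d))) '' stairPath d (Fin.init b) (Fin.init a)

def StairConvex {d : ℕ} (S : Set (Fin d → ℝ)) : Prop :=
  ∀ a ∈ S, ∀ b ∈ S, stairPath d a b ⊆ S

def sconv {d : ℕ} (X : Set (Fin d → ℝ)) : Set (Fin d → ℝ) :=
  ⋂₀ {S : Set (Fin d → ℝ) | StairConvex S ∧ X ⊆ S}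

lemma subset_sconv {d : ℕ} (X : Set (Fin d → ℝ)) : X ⊆ sconv X :=
  fun _ hx => Set.mem_sInter.2 fun _ hS => hS.2 hx

lemma sconv_min {d : ℕ} {X S : Set (Fin d → ℝ)} (hXS : X ⊆ S) (hS : StairConvex S) :
    sconv X ⊆ S :=
  fun _ hx => hx S ⟨hS, hXS⟩

lemma stairConvex_sconv {d : ℕ} (X : Set (Fin d → ℝ)) : StairConvex (sconv X) :=
  fun _ ha _ hb _ hp => Set.mem_sInter.2 fun S hS => hS.1 _ (ha S hS) _ (hb S hS) hp

lemma segment_snoc_snoc {d : ℕ} (c : Fin d → ℝ) (s t : ℝ) :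
    segment ℝ (Fin.snoc c s : Fin (d + 1) → ℝ) (Fin.snoc c t) = Fin.snoc c '' segment ℝ s t := by
  have combo : ∀ u v : ℝ, u + v = 1 →
      u • (Fin.snoc c s : Fin (d + 1) → ℝ) + v • Fin.snoc c t = Fin.snoc c (u * s + v * t) := by
    intro u v huv
    ext i
    refine Fin.lastCases ?_ (fun i => ?_) i
    · simp
    · simp only [Pi.add_apply, Pi.smul_apply, smul_eq_mul, Fin.snoc_castSucc]
      linear_combination c i * huv
  ext p
  constructor
  · rintro ⟨u, v, hu, hv, huv, rfl⟩
    exact ⟨u * s + v * t, ⟨u, v, hu, hv, huv, rfl⟩, (combo u v huv).symm⟩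
  · rintro ⟨r, ⟨u, v, hu, hv, huv, rfl⟩, rfl⟩
    exact ⟨u, v, hu, hv, huv, combo u v huv⟩

lemma stairPath_succ_of_le {d : ℕ} {a b : Fin (d + 1) → ℝ}
    (hab : a (Fin.last d) ≤ b (Fin.last d)) :
    stairPath (d + 1) a b =
      Fin.snoc (Fin.init a) '' segment ℝ (a (Fin.last d)) (b (Fin.last d)) ∪
        (fun z => Fin.snoc z (b (Fin.last d))) '' stairPath d (Fin.init a) (Fin.init b) := by
  rw [stairPath, if_pos hab, ← segment_snoc_snoc, Fin.snoc_init_self]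

lemma stairPath_succ_comm_of_lt {d : ℕ} {a b : Fin (d + 1) → ℝ}
    (hba : b (Fin.last d) < a (Fin.last d)) : stairPath (d + 1) a b = stairPath (d + 1) b a := by
  rw [stairPath, stairPath, if_neg hba.not_ge, if_pos hba.le]

lemma stairConvex_of_forall_le {d : ℕ} {S : Set (Fin (d + 1) → ℝ)}
    (h : ∀ a ∈ S, ∀ b ∈ S, a (Fin.last d) ≤ b (Fin.last d) → stairPath (d + 1) a b ⊆ S) :
    StairConvex S := by
  intro a ha b hb
  rcases le_or_gt (a (Fin.last d)) (b (Fin.last d)) with hab | hba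
  · exact h a ha b hb hab
  · rw [stairPath_succ_comm_of_lt hba]
    exact h b hb a ha hba.le

lemma stairConvex_setOf_lt_or_init_mem {d : ℕ} {T : Set (Fin d → ℝ)} (hT : StairConvex T)
    (y : ℝ) :
    StairConvex {v : Fin (d + 1) → ℝ | y < v (Fin.last d) ∨ Fin.init v ∈ T} := by
  refine stairConvex_of_forall_le fun a ha b hb hab => ?_
  rw [stairPath_succ_of_le hab]
  rintro _ (⟨s, hs, rfl⟩ | ⟨w, hw, rfl⟩)
  · rcases lt_or_ge y s with hys | hsy
    · simp [hys]
    · have has : a (Fin.last d) ≤ s := by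
        rw [segment_eq_Icc hab] at hs
        exact hs.1
      right
      rw [Fin.init_snoc]
      exact ha.resolve_left (has.trans hsy).not_gt
  · rcases lt_or_ge y (b (Fin.last d)) with hyb | hby
    · simp [hyb]
    · right
      rw [Fin.init_snoc]
      exact hT _ (ha.resolve_left (hab.trans hby).not_gt) _ (hb.resolve_left hby.not_gt) hw

lemma StairConvex.slice {d : ℕ} {S : Set (Fin (d + 1) → ℝ)} (hS : StairConvex S) (y : ℝ) :
    StairConvex {w : Fin d → ℝ | Fin.snoc w y ∈ S} := by
  intro a ha b hb p hp
  apply hS _ ha _ hb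
  rw [stairPath_succ_of_le (by simp)]
  exact Or.inr ⟨p, by simpa using hp, by simp⟩

lemma snoc_init_mem_stairPath {d : ℕ} {a b : Fin (d + 1) → ℝ} {y : ℝ}
    (hay : a (Fin.last d) ≤ y) (hyb : y ≤ b (Fin.last d)) :
    Fin.snoc (Fin.init a) y ∈ stairPath (d + 1) a b := by
  rw [stairPath_succ_of_le (hay.trans hyb), segment_eq_Icc (hay.trans hyb)]
  exact Or.inl ⟨y, ⟨hay, hyb⟩, rfl⟩

theorem sconv_slice_general (d : ℕ) (X : Set (Fin (d + 1) → ℝ)) (y : ℝ)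
    (hy : ∃ x ∈ X, y ≤ x (Fin.last d)) :
    {z : Fin d → ℝ | Fin.snoc z y ∈ sconv X} =
      sconv (Fin.init '' {x ∈ X | x (Fin.last d) ≤ y}) := by
  obtain ⟨x₀, hx₀, hyx₀⟩ := hy
  set X' := Fin.init '' {x ∈ X | x (Fin.last d) ≤ y}
  apply Set.Subset.antisymm
  · have hX : X ⊆ {v | y < v (Fin.last d) ∨ Fin.init v ∈ sconv X'} := fun x hx =>
      (lt_or_ge y (x (Fin.last d))).imp_right fun hxy => subset_sconv X' ⟨x, ⟨hx, hxy⟩, rfl⟩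
    intro z hz
    simpa using sconv_min hX (stairConvex_setOf_lt_or_init_mem (stairConvex_sconv X') y) hz
  · refine sconv_min ?_ ((stairConvex_sconv X).slice y)
    rintro _ ⟨x, ⟨hx, hxy⟩, rfl⟩
    exact stairConvex_sconv X x (subset_sconv X hx) x₀ (subset_sconv X hx₀)
      (snoc_init_mem_stairPath hxy hyx₀)

/-- If the horizontal hyperplane at height `y` does not lie entirely above `X ⊆ ℝ^(d+1)`,
then the slice of `sconv X` at height `y` equals the `ℝ^d` stair-convex hull of the
vertical projection of the part of `X` at height `≤ y`. -/
theorem sconv_slice (d : ℕ) (hd : 1 ≤ d) (X : Set (Fin (d + 1) → ℝ)) (y : ℝ)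
    (hy : ∃ x ∈ X, y ≤ x (Fin.last d)) :
    {z : Fin d → ℝ | Fin.snoc z y ∈ sconv X} =
      sconv (Fin.init '' {x ∈ X | x (Fin.last d) ≤ y}) :=
  sconv_slice_general d X y hy
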